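/- The map Mc is a bijection from S_n onto the set of subdiagonal words of length n, and the sum of the letters of Mc σ equals maj σ. -/

import Mathlib

/-- Descent set (ligne of route) of a word, with 1-based positions. -/
def ligne (w : List ℕ) : Finset ℕ :=
  (Finset.Icc 1 (w.length - 1)).filter (fun i => w.getD (i-1) 0 > w.getD i 0)

/-- Major index of a word. -/
def maj (w : List ℕ) : ℕ := ∑ i ∈ ligne w, i

/-- Inversion number of a word. -/
def inv (w : List ℕ) : ℕ :=
  ((Finset.range w.length ×ˢ Finset.range w.length).filter
    (fun p => p.1 < p.2 ∧ w.getD p.1 0 > w.getD p.2 0)).card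

/-- `w` is (the one-line word of) a permutation of `1,…,n`. -/
def IsPermWord (n : ℕ) (w : List ℕ) : Prop := w.Perm (List.range' 1 n)

/-- One-line word of `σ ∈ S_n` with values in `1,…,n`. -/
def toWord {n : ℕ} (σ : Equiv.Perm (Fin n)) : List ℕ := List.ofFn (fun i => (σ i : ℕ) + 1)

/-- Subexcedent word: `0 ≤ d_i ≤ i-1` (1-based), i.e. `d_i ≤ i` for 0-based `i`. -/
def Subexcedent (w : List ℕ) : Prop := ∀ i < w.length, w.getD i 0 ≤ i

/-- Subdiagonal word: `0 ≤ d_i ≤ n-i` (1-based). -/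
def Subdiagonal (w : List ℕ) : Prop := ∀ i < w.length, w.getD i 0 + i + 1 ≤ w.length

/-- Lehmer code: `d_i = #{j < i : x_j > x_i}`. -/
def invcode (w : List ℕ) : List ℕ :=
  (List.range w.length).map (fun i => ((Finset.range i).filter (fun j => w.getD j 0 > w.getD i 0)).card)

/-- `Lc`-code: `d_i = #{j > i : x_i > x_j}`. -/
def lc (w : List ℕ) : List ℕ :=
  (List.range w.length).map (fun i => ((Finset.Ico (i+1) w.length).filter (fun j => w.getD i 0 > w.getD j 0)).card)

/-- Major index code: `d_i = maj(σ|_i) - maj(σ|_{i-1})`, where `σ|_i` erases letters `> i`. -/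
def majcode (w : List ℕ) : List ℕ :=
  (List.range w.length).map (fun i => maj (w.filter (· ≤ i+1)) - maj (w.filter (· ≤ i)))

/-- `Mc`-code: `d_i = maj(σ^{(i)}) - maj(σ^{(i+1)})`, where `σ^{(i)}` erases letters `< i`. -/
def mc (w : List ℕ) : List ℕ :=
  (List.range w.length).map (fun i => maj (w.filter (fun x => i+1 ≤ x)) - maj (w.filter (fun x => i+2 ≤ x)))

/-- One-line word of the inverse permutation. -/
def invWord (w : List ℕ) : List ℕ :=
  (List.range w.length).map (fun i => w.idxOf (i+1) + 1)

/-- `Ic σ = Lc (σ⁻¹)`. -/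
def ic (w : List ℕ) : List ℕ := lc (invWord w)

/-- Inverse ligne of route. -/
def iligne (w : List ℕ) : Finset ℕ := ligne (invWord w)

/-- Complement map `δ` on codes: `δ(d₁⋯d_n) = (0-d₁)(1-d₂)⋯(n-1-d_n)`. -/
def deltaC (w : List ℕ) : List ℕ :=
  (List.range w.length).map (fun i => i - w.getD i 0)

/-- Nondecreasing rearrangement of a word. -/
def sortW (w : List ℕ) : List ℕ := List.insertionSort (· ≤ ·) w

/-- Set-valued statistic `El = Ligne ∘ Mc⁻¹` on subdiagonal words. -/
noncomputable def El (d : List ℕ) : Finset ℕ := by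
  classical
  exact if h : ∃ w, IsPermWord d.length w ∧ mc w = d then ligne h.choose else ∅

/-- Set-valued statistic `Eul = Ligne ∘ Majcode⁻¹` on subexcedent words. -/
noncomputable def Eul (d : List ℕ) : Finset ℕ := by
  classical
  exact if h : ∃ w, IsPermWord d.length w ∧ majcode w = d then ligne h.choose else ∅


/-!
The word σ^{(i)} arises from σ^{(i+1)} by inserting the letter i, which is smaller than all the
others. Inserting a smallest letter into slot p of a word u of length m (with descent set D) raises
the major index by `majIncr D p = (p if p ∉ D, else 0) + #{j ∈ D | p < j}`, and p ↦ majIncr D p is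
a bijection of {0, …, m}: for p < q it drops strictly when q ∈ D and rises strictly when q ∉ D.
Hence σ ↦ (its first code letter, σ with the letter 1 removed) is a bijection onto
{0, …, n-1} × S_{n-1}, which gives the bijection by induction, and the code letters telescope to
maj σ.
-/


lemma mem_ligne {w : List ℕ} {j : ℕ} :
    j ∈ ligne w ↔ 0 < j ∧ j < w.length ∧ w.getD j 0 < w.getD (j - 1) 0 := by
  simp only [ligne, Finset.mem_filter, Finset.mem_Icc]
  omega

lemma ligne_subset_Ioo (w : List ℕ) : ligne w ⊆ Finset.Ioo 0 w.length := fun j hj => by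
  rw [mem_ligne] at hj
  exact Finset.mem_Ioo.mpr ⟨hj.1, hj.2.1⟩

lemma getD_insertIdx {u : List ℕ} {p : ℕ} (hp : p ≤ u.length) (x j : ℕ) :
    (u.insertIdx p x).getD j 0 =
      if j < p then u.getD j 0 else if j = p then x else u.getD (j - 1) 0 := by
  simp only [List.getD_eq_getElem?_getD, List.getElem?_insertIdx]
  split_ifs <;> simp_all

lemma mem_ligne_insertIdx {u : List ℕ} {x p : ℕ} (hx : ∀ y ∈ u, x < y)
    (hp : p ≤ u.length) (j : ℕ) :
    j ∈ ligne (u.insertIdx p x) ↔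
      (j = p ∧ 0 < p) ∨ (j < p ∧ j ∈ ligne u) ∨ (p + 1 < j ∧ j - 1 ∈ ligne u) := by
  have hlt : ∀ i < u.length, x < u.getD i 0 := fun i hi =>
    hx _ (by rw [List.getD_eq_getElem _ _ hi]; exact List.getElem_mem _)
  simp only [mem_ligne, List.length_insertIdx_of_le_length hp, getD_insertIdx hp]
  have h0 := hlt (j - 1)
  have h1 := hlt p
  split_ifs <;> omega

def majIncr (D : Finset ℕ) (p : ℕ) : ℕ :=
  (if p ∈ D then 0 else p) + (D.filter (p < ·)).card

lemma maj_insertIdx {u : List ℕ} {x p : ℕ} (hx : ∀ y ∈ u, x < y) (hp : p ≤ u.length) :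
    maj (u.insertIdx p x) = maj u + majIncr (ligne u) p := by
  set D := ligne u
  set S := D.filter (· < p)
  set T := D.filter (p < ·)
  -- Adding the slot `p` to both descent sets makes the pieces uniform; it costs nothing in the
  -- major index of the new word, where `p` can fail to be a descent only if `p = 0`.
  have hD : insert p D = insert p S ∪ T := by
    ext j; simp only [Finset.mem_insert, Finset.mem_union, S, T, Finset.mem_filter]; grind
  have hV : insert p (ligne (u.insertIdx p x)) = insert p S ∪ T.map (addRightEmbedding 1) := by
    ext j
    simp only [Finset.mem_insert, mem_ligne_insertIdx hx hp, Finset.mem_union, Finset.mem_map, S, T,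
      Finset.mem_filter, addRightEmbedding_apply]
    constructor
    · rintro (h | ⟨rfl, -⟩ | ⟨h1, h2⟩ | ⟨h1, h2⟩)
      exacts [.inl (.inl h), .inl (.inl rfl), .inl (.inr ⟨h2, h1⟩),
        .inr ⟨j - 1, ⟨h2, by omega⟩, by omega⟩]
    · rintro ((h | ⟨h1, h2⟩) | ⟨i, ⟨h1, h2⟩, rfl⟩)
      exacts [.inl h, .inr (.inr (.inl ⟨h2, h1⟩)),
        .inr (.inr (.inr ⟨by omega, by simpa using h1⟩))]
  have hmajV : maj (u.insertIdx p x) = ∑ j ∈ insert p (ligne (u.insertIdx p x)), j := by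
    refine (Finset.sum_insert_of_eq_zero_if_notMem fun hnot => ?_).symm
    by_contra hp0
    exact hnot ((mem_ligne_insertIdx hx hp p).mpr (.inl ⟨rfl, by omega⟩))
  have hmajD : ∑ j ∈ insert p D, j = maj u + if p ∈ D then 0 else p := by
    by_cases h : p ∈ D
    · rw [Finset.insert_eq_of_mem h, if_pos h, add_zero]; rfl
    · rw [Finset.sum_insert h, if_neg h, add_comm]; rfl
  have hS : p ∉ S := by simp [S]
  have hST : Disjoint (insert p S) T := by
    simp only [Finset.disjoint_left, Finset.mem_insert, S, T, Finset.mem_filter]; omega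
  have hST' : Disjoint (insert p S) (T.map (addRightEmbedding 1)) := by
    simp only [Finset.disjoint_left, Finset.mem_insert, Finset.mem_map, S, T, Finset.mem_filter,
      addRightEmbedding_apply]; omega
  rw [hD, Finset.sum_union hST, Finset.sum_insert hS] at hmajD
  rw [hmajV, hV, Finset.sum_union hST', Finset.sum_insert hS, Finset.sum_map, majIncr]
  simp only [addRightEmbedding_apply, Finset.sum_add_distrib, Finset.sum_const, smul_eq_mul,
    mul_one]
  change _ = _ + (_ + T.card)
  omega

lemma majIncr_injective (D : Finset ℕ) : Function.Injective (majIncr D) := by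
  refine Function.Injective.of_lt_imp_ne fun p q hpq => ?_
  unfold majIncr
  by_cases hq : q ∈ D
  · have : insert q (D.filter (q < ·)) ⊆ D.filter (p < ·) := by
      intro j; simp only [Finset.mem_insert, Finset.mem_filter]; grind
    have := Finset.card_le_card this
    rw [Finset.card_insert_of_notMem (by simp)] at this
    rw [if_pos hq]
    omega
  · have : D.filter (p < ·) ⊆ Finset.Ioo p q ∪ D.filter (q < ·) := by
      intro j; simp only [Finset.mem_union, Finset.mem_Ioo, Finset.mem_filter]
      rintro ⟨h1, h2⟩
      rcases lt_trichotomy j q with h | rfl | h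
      exacts [.inl ⟨h2, h⟩, absurd h1 hq, .inr ⟨h1, h⟩]
    have := (Finset.card_le_card this).trans (Finset.card_union_le _ _)
    rw [Nat.card_Ioo] at this
    rw [if_neg hq]
    split_ifs <;> omega

lemma majIncr_le {D : Finset ℕ} {m p : ℕ} (hD : D ⊆ Finset.Ioo 0 m) (hp : p ≤ m) :
    majIncr D p ≤ m := by
  have : D.filter (p < ·) ⊆ Finset.Ioo p m := fun j hj => by
    rw [Finset.mem_filter] at hj
    exact Finset.mem_Ioo.mpr ⟨hj.2, (Finset.mem_Ioo.mp (hD hj.1)).2⟩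
  have hcard := Finset.card_le_card this
  rw [Nat.card_Ioo] at hcard
  unfold majIncr
  split_ifs with h
  · have := (Finset.mem_Ioo.mp (hD h)).2; omega
  · omega

lemma majIncr_bijOn {D : Finset ℕ} {m : ℕ} (hD : D ⊆ Finset.Ioo 0 m) :
    Set.BijOn (majIncr D) (Set.Iic m) (Set.Iic m) :=
  ((Set.finite_Iic m).injOn_iff_bijOn_of_mapsTo fun _ hp => majIncr_le hD hp).mp
    (majIncr_injective D).injOn

lemma filter_insertIdx_of_neg {α : Type*} {q : α → Bool} {x : α} (hx : q x = false)
    (l : List α) (i : ℕ) : (l.insertIdx i x).filter q = l.filter q := by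
  induction l generalizing i with
  | nil => cases i <;> simp [List.insertIdx_zero, List.insertIdx_succ_nil, hx]
  | cons a l ih =>
    cases i <;> simp [List.insertIdx_zero, List.insertIdx_succ_cons, List.filter_cons, hx, ih]

lemma insertIdx_length_append {α : Type*} (a b : List α) (x : α) :
    (a ++ b).insertIdx a.length x = a ++ x :: b := by
  induction a with
  | nil => simp [List.insertIdx_zero]
  | cons c a ih => simp [List.insertIdx_succ_cons, ih]

lemma exists_eq_insertIdx_of_perm_cons {α : Type*} {w l : List α} {x : α}
    (hw : w.Perm (x :: l)) :
    ∃ (v : List α) (p : ℕ), v.Perm l ∧ p ≤ v.length ∧ w = v.insertIdx p x := by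
  obtain ⟨a, b, rfl⟩ := List.append_of_mem (hw.mem_iff.mpr List.mem_cons_self)
  refine ⟨a ++ b, a.length, (List.perm_cons x).mp (List.perm_middle.symm.trans hw), by simp, ?_⟩
  rw [insertIdx_length_append]

lemma le_of_mem_of_perm_range' {w : List ℕ} {s m y : ℕ} (hw : w.Perm (List.range' s m))
    (hy : y ∈ w) : s ≤ y :=
  (List.mem_range'_1.mp (hw.mem_iff.mp hy)).1

/-- The `Mc`-code of a word on the letters `k + 1, k + 2, …`; the offset `k` lets the code recurse
without relabelling letters. -/
def mcFrom (k : ℕ) (w : List ℕ) : List ℕ :=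
  (List.range w.length).map fun i =>
    maj (w.filter (k + i + 1 ≤ ·)) - maj (w.filter (k + i + 2 ≤ ·))

lemma mc_eq_mcFrom_zero : mc = mcFrom 0 := by
  funext w
  simp [mc, mcFrom]

@[simp]
lemma length_mcFrom (k : ℕ) (w : List ℕ) : (mcFrom k w).length = w.length := by
  simp [mcFrom]

lemma mcFrom_insertIdx {k p : ℕ} {v : List ℕ} (hv : ∀ y ∈ v, k + 2 ≤ y)
    (hp : p ≤ v.length) :
    mcFrom k (v.insertIdx p (k + 1)) = majIncr (ligne v) p :: mcFrom (k + 1) v := by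
  have hfilter : ∀ t, k + 2 ≤ t →
      (v.insertIdx p (k + 1)).filter (t ≤ ·) = v.filter (t ≤ ·) := fun t ht =>
    filter_insertIdx_of_neg (by simp only [decide_eq_false_iff_not]; omega) v p
  have hw1 : ∀ y ∈ v.insertIdx p (k + 1), k + 1 ≤ y := fun y hy => by
    rcases List.mem_cons.mp ((List.perm_insertIdx _ _ hp).mem_iff.mp hy) with rfl | hy
    exacts [le_rfl, by have := hv y hy; omega]
  rw [mcFrom, List.length_insertIdx_of_le_length hp, List.range_succ_eq_map,
    List.map_cons, List.map_map, mcFrom]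
  congr 1
  · rw [add_zero, hfilter (k + 2) le_rfl,
      List.filter_eq_self.mpr fun y hy => by simpa using hw1 y hy,
      List.filter_eq_self.mpr fun y hy => by simpa using hv y hy,
      maj_insertIdx (fun y hy => hv y hy) hp]
    omega
  · refine List.map_congr_left fun i _ => ?_
    simp only [Function.comp_apply, Nat.succ_eq_add_one]
    rw [hfilter _ (by omega), hfilter _ (by omega), show k + (i + 1) = k + 1 + i by omega]

lemma subdiagonal_cons {c : ℕ} {d : List ℕ} :
    Subdiagonal (c :: d) ↔ c ≤ d.length ∧ Subdiagonal d := by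
  simp only [Subdiagonal, List.length_cons]
  constructor
  · intro h
    refine ⟨by simpa using h 0 (by omega), fun i hi => ?_⟩
    have := h (i + 1) (by omega)
    simp only [List.getD_cons_succ] at this
    omega
  · rintro ⟨hc, hd⟩ (_ | i) hi
    · simpa using hc
    · have := hd i (by omega)
      simp only [List.getD_cons_succ]
      omega

section PermWords

variable {k m : ℕ} {w : List ℕ}

lemma exists_eq_insertIdx_of_perm_range' (hw : w.Perm (List.range' (k + 1) (m + 1))) :
    ∃ (v : List ℕ) (p : ℕ), v.Perm (List.range' (k + 2) m) ∧ p ≤ v.length ∧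
      w = v.insertIdx p (k + 1) := by
  rw [List.range'_succ] at hw
  exact exists_eq_insertIdx_of_perm_cons hw

lemma mcFrom_insertIdx_of_perm {v : List ℕ} {p : ℕ} (hv : v.Perm (List.range' (k + 2) m))
    (hp : p ≤ v.length) :
    mcFrom k (v.insertIdx p (k + 1)) = majIncr (ligne v) p :: mcFrom (k + 1) v :=
  mcFrom_insertIdx (fun _ hy => le_of_mem_of_perm_range' hv hy) hp

lemma sum_mcFrom (hw : w.Perm (List.range' (k + 1) m)) : (mcFrom k w).sum = maj w := by
  induction m generalizing k w with
  | zero => simp_all [mcFrom, maj, ligne]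
  | succ m ih =>
    obtain ⟨v, p, hv, hp, rfl⟩ := exists_eq_insertIdx_of_perm_range' hw
    rw [mcFrom_insertIdx_of_perm hv hp, List.sum_cons, ih hv,
      maj_insertIdx (fun _ hy => le_of_mem_of_perm_range' hv hy) hp, add_comm]

lemma subdiagonal_mcFrom (hw : w.Perm (List.range' (k + 1) m)) : Subdiagonal (mcFrom k w) := by
  induction m generalizing k w with
  | zero => simp_all [mcFrom, Subdiagonal]
  | succ m ih =>
    obtain ⟨v, p, hv, hp, rfl⟩ := exists_eq_insertIdx_of_perm_range' hw
    rw [mcFrom_insertIdx_of_perm hv hp, subdiagonal_cons, length_mcFrom]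
    exact ⟨majIncr_le (ligne_subset_Ioo v) hp, ih hv⟩

lemma mcFrom_injOn : Set.InjOn (mcFrom k) {w | w.Perm (List.range' (k + 1) m)} := by
  induction m generalizing k with
  | zero => intro w hw w' hw' _; simp_all
  | succ m ih =>
    rintro w hw w' hw' h
    obtain ⟨v, p, hv, hp, rfl⟩ := exists_eq_insertIdx_of_perm_range' hw
    obtain ⟨v', p', hv', hp', rfl⟩ := exists_eq_insertIdx_of_perm_range' hw'
    rw [mcFrom_insertIdx_of_perm hv hp, mcFrom_insertIdx_of_perm hv' hp', List.cons_eq_cons] at h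
    obtain rfl := ih hv hv' h.2
    rw [majIncr_injective _ h.1]

lemma mcFrom_surjOn :
    Set.SurjOn (mcFrom k) {w | w.Perm (List.range' (k + 1) m)}
      {d | d.length = m ∧ Subdiagonal d} := by
  induction m generalizing k with
  | zero => rintro d ⟨hd, -⟩; exact ⟨[], by simp_all [mcFrom]⟩
  | succ m ih =>
    rintro (_ | ⟨c, d⟩) ⟨hlen, hd⟩
    · simp at hlen
    rw [subdiagonal_cons] at hd
    obtain ⟨v, hv, rfl⟩ := ih (k := k + 1) ⟨by simpa using hlen, hd.2⟩
    obtain ⟨p, hp, rfl⟩ := (majIncr_bijOn (ligne_subset_Ioo v)).surjOn (by simpa using hd.1)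
    refine ⟨v.insertIdx p (k + 1), ?_, mcFrom_insertIdx_of_perm hv hp⟩
    exact (List.perm_insertIdx _ _ hp).trans (by rw [List.range'_succ]; exact hv.cons _)

lemma mcFrom_bijOn :
    Set.BijOn (mcFrom k) {w | w.Perm (List.range' (k + 1) m)}
      {d | d.length = m ∧ Subdiagonal d} :=
  ⟨fun w hw => ⟨by rw [length_mcFrom, hw.length_eq, List.length_range'],
      subdiagonal_mcFrom hw⟩,
    mcFrom_injOn, mcFrom_surjOn⟩

end PermWords

theorem stmt9 (n : ℕ) :
    Set.BijOn mc {w | IsPermWord n w} {w | w.length = n ∧ Subdiagonal w} ∧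
      ∀ w : List ℕ, IsPermWord n w → (mc w).sum = maj w := by
  rw [mc_eq_mcFrom_zero]
  exact ⟨mcFrom_bijOn, fun w hw => sum_mcFrom hw⟩
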